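/- Let Φ be a feature map whose distribution under p_x is a zero-mean mixture of Gaussians with total variance (diversity) ν = Σ_i α_i (tr(Σ_i) + ‖μ_i‖₂²), and let the classifier over C classes be the softmax with weights w = (w_1,...,w_C). Then ‖w‖₂ ≥ (log(C) − E_{x~p_x}[H[p(·|x; w)]]) / (2√ν), where ‖w‖₂ = √(Σ_i ‖w_i‖₂²) and H is the Shannon entropy of the softmax output. -/

import Mathlib

/-!
With logits `a i = ⟪w i, φ⟫` and `p = softmax a`, the entropy of `p` equals
`log ∑ exp (a i) - ∑ p i * a i`. If every `|a i| ≤ r`, the first term lies within `r` of `log C`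
and the second has absolute value at most `r`, so the entropy is within `2 r` of `log C`; by
Cauchy–Schwarz, `r = ‖w‖ ‖φ‖` will do. Taking expectations,
`log C - E[H] ≤ 2 ‖w‖ E‖Φ‖ ≤ 2 ‖w‖ √(E‖Φ‖²) = 2 ‖w‖ √ν`.
-/

open MeasureTheory
open scoped RealInnerProductSpace

/-- Shannon entropy of the softmax distribution with weights `w` on feature `φ`. -/
noncomputable def softmaxEntropy {n C : ℕ} (w : Fin C → EuclideanSpace ℝ (Fin n))
    (φ : EuclideanSpace ℝ (Fin n)) : ℝ :=
  -∑ i, (Real.exp ⟪w i, φ⟫ / ∑ j, Real.exp ⟪w j, φ⟫) *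
      Real.log (Real.exp ⟪w i, φ⟫ / ∑ j, Real.exp ⟪w j, φ⟫)

open Finset Real

section Softmax

variable {ι : Type*} [Fintype ι] [Nonempty ι] {a : ι → ℝ} {r : ℝ}

lemma sum_exp_pos (a : ι → ℝ) : 0 < ∑ i, exp (a i) :=
  sum_pos (fun _ _ => exp_pos _) univ_nonempty

lemma sum_exp_div_sum_exp (a : ι → ℝ) : ∑ i, exp (a i) / ∑ j, exp (a j) = 1 := by
  rw [← sum_div, div_self (sum_exp_pos a).ne']

lemma neg_sum_softmax_mul_log_softmax (a : ι → ℝ) :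
    -∑ i, (exp (a i) / ∑ j, exp (a j)) * log (exp (a i) / ∑ j, exp (a j)) =
      log (∑ j, exp (a j)) - ∑ i, (exp (a i) / ∑ j, exp (a j)) * a i := by
  have hlog (i : ι) : log (exp (a i) / ∑ j, exp (a j)) = a i - log (∑ j, exp (a j)) := by
    rw [log_div (exp_ne_zero _) (sum_exp_pos a).ne', log_exp]
  simp only [hlog, mul_sub, sum_sub_distrib, ← sum_mul, sum_exp_div_sum_exp, one_mul]
  ring

lemma abs_log_sum_exp_sub_log_card_le (h : ∀ i, |a i| ≤ r) :
    |log (∑ i, exp (a i)) - log (Fintype.card ι)| ≤ r := by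
  have hcard : (0 : ℝ) < Fintype.card ι := Nat.cast_pos.mpr Fintype.card_pos
  have hlower : Fintype.card ι * exp (-r) ≤ ∑ i, exp (a i) := by
    simpa using card_nsmul_le_sum univ (fun i => exp (a i)) _
      fun i _ => exp_le_exp.mpr (neg_le_of_abs_le (h i))
  have hupper : ∑ i, exp (a i) ≤ Fintype.card ι * exp r := by
    simpa using sum_le_card_nsmul univ (fun i => exp (a i)) _
      fun i _ => exp_le_exp.mpr (le_of_abs_le (h i))
  have hlo := log_le_log (by positivity) hlower
  have hup := log_le_log (sum_exp_pos a) hupper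
  rw [log_mul hcard.ne' (exp_ne_zero _), log_exp] at hlo hup
  exact abs_sub_le_iff.mpr ⟨by linarith, by linarith⟩

lemma abs_sum_softmax_mul_le (h : ∀ i, |a i| ≤ r) :
    |∑ i, (exp (a i) / ∑ j, exp (a j)) * a i| ≤ r := by
  have hp (i : ι) : 0 ≤ exp (a i) / ∑ j, exp (a j) := (div_pos (exp_pos _) (sum_exp_pos a)).le
  calc |∑ i, (exp (a i) / ∑ j, exp (a j)) * a i|
      ≤ ∑ i, (exp (a i) / ∑ j, exp (a j)) * |a i| := by
        refine (abs_sum_le_sum_abs _ _).trans_eq (sum_congr rfl fun i _ => ?_)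
        rw [abs_mul, abs_of_nonneg (hp i)]
    _ ≤ ∑ i, (exp (a i) / ∑ j, exp (a j)) * r :=
        sum_le_sum fun i _ => mul_le_mul_of_nonneg_left (h i) (hp i)
    _ = r := by rw [← sum_mul, sum_exp_div_sum_exp, one_mul]

lemma abs_softmax_entropy_sub_log_card_le (h : ∀ i, |a i| ≤ r) :
    |-∑ i, (exp (a i) / ∑ j, exp (a j)) * log (exp (a i) / ∑ j, exp (a j)) -
        log (Fintype.card ι)| ≤ 2 * r := by
  rw [neg_sum_softmax_mul_log_softmax]
  have h₁ := abs_log_sum_exp_sub_log_card_le h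
  have h₂ := abs_sum_softmax_mul_le h
  rw [abs_le] at h₁ h₂ ⊢
  constructor <;> linarith

end Softmax

lemma abs_inner_le_sqrt_sum_sq_norm_mul_norm {ι E : Type*} [Fintype ι]
    [NormedAddCommGroup E] [InnerProductSpace ℝ E] (w : ι → E) (i : ι) (φ : E) :
    |⟪w i, φ⟫| ≤ √(∑ j, ‖w j‖ ^ 2) * ‖φ‖ := by
  refine (abs_real_inner_le_norm _ _).trans (mul_le_mul_of_nonneg_right ?_ (norm_nonneg _))
  exact le_sqrt_of_sq_le (single_le_sum (fun j _ => sq_nonneg ‖w j‖) (mem_univ i))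

lemma abs_softmaxEntropy_sub_log_le {n C : ℕ} (w : Fin C → EuclideanSpace ℝ (Fin n))
    (φ : EuclideanSpace ℝ (Fin n)) :
    |softmaxEntropy w φ - log C| ≤ 2 * (√(∑ i, ‖w i‖ ^ 2) * ‖φ‖) := by
  rcases C.eq_zero_or_pos with rfl | hC
  · simp [softmaxEntropy] -- the empty entropy is `0`, and so is the junk value `log 0`
  · have : Nonempty (Fin C) := ⟨⟨0, hC⟩⟩
    simpa only [softmaxEntropy, Fintype.card_fin] using abs_softmax_entropy_sub_log_card_le
      (abs_inner_le_sqrt_sum_sq_norm_mul_norm w · φ)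

lemma measurable_softmaxEntropy {n C : ℕ} (w : Fin C → EuclideanSpace ℝ (Fin n)) :
    Measurable (softmaxEntropy w) := by
  unfold softmaxEntropy
  fun_prop

section Expectation

variable {X : Type*} [MeasurableSpace X] {μ : Measure X} [IsProbabilityMeasure μ]

lemma sq_integral_le_integral_sq {f : X → ℝ} (hf : MemLp f 2 μ) :
    (∫ x, f x ∂μ) ^ 2 ≤ ∫ x, f x ^ 2 ∂μ := by
  have := ProbabilityTheory.variance_nonneg f μ
  rw [ProbabilityTheory.variance_eq_sub hf] at this
  simpa using this

lemma abs_integral_sub_le_of_abs_sub_le {f g : X → ℝ} {c : ℝ} (hf : AEStronglyMeasurable f μ)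
    (hg : Integrable g μ) (h : ∀ x, |f x - c| ≤ g x) : |∫ x, f x ∂μ - c| ≤ ∫ x, g x ∂μ := by
  have hfc : Integrable (fun x => f x - c) μ :=
    hg.mono' (hf.sub aestronglyMeasurable_const) (ae_of_all _ h)
  have hf_int : Integrable f μ :=
    (hfc.add (integrable_const c)).congr (ae_of_all _ fun x => sub_add_cancel (f x) c)
  calc |∫ x, f x ∂μ - c| = |∫ x, (f x - c) ∂μ| := by
        rw [integral_sub hf_int (integrable_const c), integral_const, probReal_univ, one_smul]
    _ ≤ ∫ x, g x ∂μ :=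
        norm_integral_le_of_norm_le hg (ae_of_all _ fun x => (norm_eq_abs _).trans_le (h x))

end Expectation

theorem stmt_6_general {X : Type*} [MeasurableSpace X] (P : Measure X) [IsProbabilityMeasure P]
    (n C : ℕ) (w : Fin C → EuclideanSpace ℝ (Fin n))
    (Φ : X → EuclideanSpace ℝ (Fin n)) (hΦ : Measurable Φ)
    (hmem : MemLp (fun x => ‖Φ x‖) 2 P)
    (ν : ℝ) (hdiv : ∫ x, ‖Φ x‖ ^ 2 ∂P = ν) :
    Real.sqrt (∑ i, ‖w i‖ ^ 2) ≥
      (Real.log C - ∫ x, softmaxEntropy w (Φ x) ∂P) / (2 * Real.sqrt ν) := by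
  set W := √(∑ i, ‖w i‖ ^ 2)
  have hgap : |∫ x, softmaxEntropy w (Φ x) ∂P - log C| ≤ ∫ x, 2 * (W * ‖Φ x‖) ∂P :=
    abs_integral_sub_le_of_abs_sub_le
      ((measurable_softmaxEntropy w).comp hΦ).aestronglyMeasurable
      ((hmem.integrable one_le_two).const_mul W |>.const_mul 2)
      fun x => abs_softmaxEntropy_sub_log_le w (Φ x)
  have hmean : ∫ x, ‖Φ x‖ ∂P ≤ √ν := le_sqrt_of_sq_le (hdiv ▸ sq_integral_le_integral_sq hmem)
  refine div_le_of_le_mul₀ (by positivity) (sqrt_nonneg _) ?_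
  calc log C - ∫ x, softmaxEntropy w (Φ x) ∂P
      ≤ 2 * (W * ∫ x, ‖Φ x‖ ∂P) := by
        rw [integral_const_mul, integral_const_mul] at hgap
        linarith [neg_le_of_abs_le hgap]
    _ ≤ 2 * (W * √ν) := by gcongr
    _ = W * (2 * √ν) := by ring

/-- Lower bound on the classifier norm in terms of the expected softmax entropy and the
diversity `ν = E[‖Φ(x)‖²]` of the (zero-mean Gaussian-mixture) feature distribution. -/
theorem stmt_6 {X : Type*} [MeasurableSpace X] (P : Measure X) [IsProbabilityMeasure P]
    (n C : ℕ) (hC : 0 < C) (w : Fin C → EuclideanSpace ℝ (Fin n))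
    (Φ : X → EuclideanSpace ℝ (Fin n)) (hΦ : Measurable Φ)
    (hmem : MemLp (fun x => ‖Φ x‖) 2 P)
    (ν : ℝ) (hν : 0 < ν) (hdiv : ∫ x, ‖Φ x‖ ^ 2 ∂P = ν) :
    Real.sqrt (∑ i, ‖w i‖ ^ 2) ≥
      (Real.log C - ∫ x, softmaxEntropy w (Φ x) ∂P) / (2 * Real.sqrt ν) :=
  stmt_6_general P n C w Φ hΦ hmem ν hdiv
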